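/- arXiv:1801.05951 — 3 statements merged into one kernel-verified Lean document; each statement's English description precedes it below -/
import Mathlib

section
/- Let P, N, σ² > 0 satisfy σ² < P²/N − P, and for α ∈ (0, √(N/(P+σ²))] define R(α) = (1/2)·log₂( 1 + (1−α)² P / (N − α² P) ), noting that N − α²P > 0 on this interval. Then the minimum of R over the interval (0, √(N/(P+σ²))] is attained at α = N/P and equals (1/2)·log₂(P/N); that is, R(N/P) = (1/2)·log₂(P/N) and R(α) ≥ (1/2)·log₂(P/N) for all α ∈ (0, √(N/(P+σ²))]. -/
/-!
On the admissible interval `N - α²P > 0`, and the identity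
`1 + (1-α)²P/(N - α²P) - P/N = (N - αP)² / (N (N - α²P))`
shows that the argument of `log₂` is at least `P/N`, with equality exactly at `α = N/P`.
-/

theorem div_le_one_add_sq_mul_div_sub {P N α : ℝ} (hN : 0 < N) (hα : α ^ 2 * P < N) :
    P / N ≤ 1 + (1 - α) ^ 2 * P / (N - α ^ 2 * P) := by
  have hden : 0 < N - α ^ 2 * P := sub_pos.mpr hα
  rw [← sub_nonneg]
  have hdiff : 1 + (1 - α) ^ 2 * P / (N - α ^ 2 * P) - P / N =
      (N - α * P) ^ 2 / (N * (N - α ^ 2 * P)) := by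
    field_simp
    ring
  rw [hdiff]
  positivity

theorem one_add_sq_mul_div_sub_at_div {P N : ℝ} (hP : P ≠ 0) (hN : N ≠ 0) (hNP : N ≠ P) :
    1 + (1 - N / P) ^ 2 * P / (N - (N / P) ^ 2 * P) = P / N := by
  have hPN : P - N ≠ 0 := sub_ne_zero.mpr hNP.symm
  have hden : N - (N / P) ^ 2 * P = N * (P - N) / P := by
    field_simp
  rw [hden]
  field_simp
  ring

theorem sq_mul_lt_of_le_sqrt_div_add {P N σ2 α : ℝ} (hP : 0 ≤ P) (hσ : 0 < σ2) (hα0 : 0 < α)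
    (hα : α ≤ Real.sqrt (N / (P + σ2))) : α ^ 2 * P < N := by
  rw [Real.le_sqrt' hα0, le_div_iff₀ (by positivity)] at hα
  nlinarith [mul_pos (pow_pos hα0 2) hσ]

/-- Let `P, N, σ² > 0` with `σ² < P²/N - P`, and
`R(α) = (1/2)·log₂(1 + (1-α)²P/(N - α²P))` for `α ∈ (0, √(N/(P+σ²))]`.
Then the minimum of `R` over this interval is attained at `α = N/P`, where it
equals `(1/2)·log₂(P/N)`. -/
theorem scale_and_babble_min_low_noise (P N σ2 : ℝ)
    (hP : 0 < P) (hN : 0 < N) (hσ : 0 < σ2) (h : σ2 < P ^ 2 / N - P) :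
    N / P ∈ Set.Ioc (0 : ℝ) (Real.sqrt (N / (P + σ2))) ∧
    (1 / 2) * Real.logb 2 (1 + (1 - N / P) ^ 2 * P / (N - (N / P) ^ 2 * P)) =
      (1 / 2) * Real.logb 2 (P / N) ∧
    ∀ α ∈ Set.Ioc (0 : ℝ) (Real.sqrt (N / (P + σ2))),
      (1 / 2) * Real.logb 2 (P / N) ≤
        (1 / 2) * Real.logb 2 (1 + (1 - α) ^ 2 * P / (N - α ^ 2 * P)) := by
  have hPσ : 0 < P + σ2 := by linarith
  have hkey : N * (P + σ2) < P ^ 2 := by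
    rw [lt_sub_iff_add_lt, lt_div_iff₀ hN] at h
    linarith
  have hNP : N < P := by nlinarith
  refine ⟨⟨by positivity, ?_⟩, ?_, ?_⟩
  · rw [Real.le_sqrt' (by positivity), div_pow, div_le_div_iff₀ (by positivity) hPσ]
    nlinarith
  · rw [one_add_sq_mul_div_sub_at_div hP.ne' hN.ne' hNP.ne]
  · rintro α ⟨hα0, hα⟩
    gcongr 1 / 2 * ?_
    exact Real.logb_le_logb_of_le one_lt_two (by positivity)
      (div_le_one_add_sq_mul_div_sub hN (sq_mul_lt_of_le_sqrt_div_add hP.le hσ hα0 hα))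
end

section
/- Let P, N, σ² > 0 satisfy σ² ≥ max{P²/N − P, N − P}, and for α ∈ (0, √(N/(P+σ²))] define R(α) = (1/2)·log₂( 1 + (1−α)² P / (N − α² P) ), noting that N − α²P > 0 on this interval. Then the minimum of R over the interval (0, √(N/(P+σ²))] is attained at the right endpoint α = √(N/(P+σ²)) and equals R_myop := (1/2)·log₂( ((P+σ²)(P+N) − 2P√(N(P+σ²))) / (N σ²) ). -/
/-!
Write `s = √(N/(P+σ²))`, so that `s²(P+σ²) = N`. The rate is an increasing function of
`g(α) = (1-α)²P/(N-α²P)`, and after cross-multiplying, `g(α) - g(β)` for `0 ≤ α ≤ β` has the sign of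
`P(β-α)((1-α)(N-Pβ) + (1-β)(N-Pα))`. This is nonnegative as soon as `β ≤ 1` and `βP ≤ N`; for
`β = s` these are exactly the high-noise conditions `N - P ≤ σ²` and `P²/N - P ≤ σ²`. At the endpoint
`N - s²P = s²σ²`, which turns `R(s)` into `R_myop`.
-/

open Real Set

noncomputable def scaleBabbleRate (P N α : ℝ) : ℝ :=
  1 / 2 * logb 2 (1 + (1 - α) ^ 2 * P / (N - α ^ 2 * P))

section Monotonicity

variable {P N β : ℝ}

theorem one_sub_sq_mul_div_antitoneOn (hP : 0 ≤ P) (hβ1 : β ≤ 1) (hβN : β * P ≤ N)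
    (hβ : β ^ 2 * P < N) :
    AntitoneOn (fun α => (1 - α) ^ 2 * P / (N - α ^ 2 * P)) (Icc 0 β) := by
  rintro a ⟨ha0, haβ⟩ b ⟨hb0, hbβ⟩ hab
  have hden_b : 0 < N - b ^ 2 * P := by
    nlinarith [mul_le_mul_of_nonneg_right (pow_le_pow_left₀ hb0 hbβ 2) hP]
  have hden_a : 0 < N - a ^ 2 * P := by
    nlinarith [mul_le_mul_of_nonneg_right (pow_le_pow_left₀ ha0 hab 2) hP]
  have hfactor : (1 - a) ^ 2 * P * (N - b ^ 2 * P) - (1 - b) ^ 2 * P * (N - a ^ 2 * P) =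
      P * (b - a) * ((1 - a) * (N - P * b) + (1 - b) * (N - P * a)) := by ring
  have hsum : 0 ≤ (1 - a) * (N - P * b) + (1 - b) * (N - P * a) :=
    add_nonneg (mul_nonneg (by linarith) (by nlinarith)) (mul_nonneg (by linarith) (by nlinarith))
  rw [div_le_div_iff₀ hden_b hden_a]
  nlinarith [mul_nonneg (mul_nonneg hP (sub_nonneg.2 hab)) hsum]

theorem scaleBabbleRate_antitoneOn (hP : 0 ≤ P) (hβ1 : β ≤ 1) (hβN : β * P ≤ N)
    (hβ : β ^ 2 * P < N) : AntitoneOn (scaleBabbleRate P N) (Icc 0 β) := by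
  intro a ha b hb hab
  have hg_nonneg : 0 ≤ (1 - b) ^ 2 * P / (N - b ^ 2 * P) := by
    have : b ^ 2 * P ≤ β ^ 2 * P :=
      mul_le_mul_of_nonneg_right (pow_le_pow_left₀ hb.1 hb.2 2) hP
    exact div_nonneg (by positivity) (by linarith)
  unfold scaleBabbleRate
  gcongr 1 / 2 * ?_
  exact logb_le_logb_of_le one_lt_two (by linarith)
    (by linarith [one_sub_sq_mul_div_antitoneOn hP hβ1 hβN hβ ha hb hab])

end Monotonicity

theorem sqrt_mul_eq_sqrt_div_mul {N T : ℝ} (hT : 0 < T) : √(N * T) = √(N / T) * T := by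
  rw [← sqrt_sq hT.le, ← sqrt_mul' _ (sq_nonneg T), sqrt_sq hT.le]
  congr 1
  field_simp

theorem scaleBabbleRate_eq {P N σ2 s : ℝ} (hs : s ^ 2 * (P + σ2) = N) (hs0 : s ≠ 0)
    (hσ : σ2 ≠ 0) (hT : P + σ2 ≠ 0) :
    scaleBabbleRate P N s =
      1 / 2 * logb 2 (((P + σ2) * (P + N) - 2 * P * (s * (P + σ2))) / (N * σ2)) := by
  have hden : N - s ^ 2 * P = s ^ 2 * σ2 := by rw [← hs]; ring
  unfold scaleBabbleRate
  rw [hden, ← hs]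
  congr 2
  field_simp
  ring

/-- Let `P, N, σ² > 0` with `σ² ≥ max{P²/N - P, N - P}`, and
`R(α) = (1/2)·log₂(1 + (1-α)²P/(N - α²P))` for `α ∈ (0, √(N/(P+σ²))]`.
Then the minimum of `R` over this interval is attained at the right endpoint
`α = √(N/(P+σ²))` and equals
`R_myop = (1/2)·log₂(((P+σ²)(P+N) - 2P√(N(P+σ²)))/(Nσ²))`. -/
theorem scale_and_babble_min_high_noise (P N σ2 : ℝ)
    (hP : 0 < P) (hN : 0 < N) (hσ : 0 < σ2)
    (h1 : P ^ 2 / N - P ≤ σ2) (h2 : N - P ≤ σ2) :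
    (1 / 2) * Real.logb 2 (1 + (1 - Real.sqrt (N / (P + σ2))) ^ 2 * P /
        (N - Real.sqrt (N / (P + σ2)) ^ 2 * P)) =
      (1 / 2) * Real.logb 2
        (((P + σ2) * (P + N) - 2 * P * Real.sqrt (N * (P + σ2))) / (N * σ2)) ∧
    ∀ α ∈ Set.Ioc (0 : ℝ) (Real.sqrt (N / (P + σ2))),
      (1 / 2) * Real.logb 2
          (((P + σ2) * (P + N) - 2 * P * Real.sqrt (N * (P + σ2))) / (N * σ2)) ≤
        (1 / 2) * Real.logb 2 (1 + (1 - α) ^ 2 * P / (N - α ^ 2 * P)) := by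
  have hT : 0 < P + σ2 := by positivity
  rw [sqrt_mul_eq_sqrt_div_mul hT]
  set s := √(N / (P + σ2))
  have hs : s ^ 2 * (P + σ2) = N := by
    rw [sq_sqrt (by positivity), div_mul_cancel₀ _ hT.ne']
  have hs0 : 0 < s := sqrt_pos.2 (by positivity)
  have hs1 : s ≤ 1 := sqrt_le_one.2 ((div_le_one hT).2 (by linarith))
  have hsP : s * P ≤ N := by
    have hP2 : P ^ 2 ≤ N * (P + σ2) := by
      have := (div_le_iff₀ hN).1 (show P ^ 2 / N ≤ P + σ2 by linarith)
      linarith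
    nlinarith
  have hden : s ^ 2 * P < N := by nlinarith
  have hvalue := scaleBabbleRate_eq hs hs0.ne' hσ.ne' hT.ne'
  refine ⟨hvalue, fun α hα => ?_⟩
  rw [← hvalue]
  exact scaleBabbleRate_antitoneOn hP.le hs1 hsP hden ⟨hα.1.le, hα.2⟩ ⟨hs0.le, le_rfl⟩ hα.2
end

section
/- Let 0 < N < P and ε > 0. There exists n₀ ∈ ℕ such that for all n ≥ n₀ and every finite set C of points on the sphere {x ∈ ℝⁿ : ‖x‖₂ = √(nP)} with |C| ≥ 2^{n((1/2)·log₂(P/N) + ε)}, there exists a point y ∈ ℝⁿ with ‖y‖₂ = √(n(P−N)) such that |{x ∈ C : ‖x − y‖₂ ≤ √(nN)}| ≥ 2^{nε/2}. In other words, any spherical code of rate exceeding (1/2)·log₂(P/N) has list-size exponentially large in n against an omniscient adversary of power √(nN). -/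
/-!
Around each codeword `x` put a solid cylinder along the direction of `x`, of height `≍ ρ` and
cross-section radius `ρ / (κ q)`, where `ρ = √(n(P-N))`, `κ = √(P/N)` and `q = 2^(ε/4)`. Each
point `z` of such a cylinder lies in the ball of radius `ρ` and is so close in angle to `x` that
its radial projection `y` onto the sphere of radius `ρ` satisfies `‖x - y‖ ≤ √(nN)`. A cylinder
has volume `≍ ρ^n (κ q)^(-n)`, so when `|C| ≥ 2^(n((1/2)log₂(P/N) + ε)) = (κ q^4)^n` and `n` is
large, the total volume of the cylinders exceeds `2^(nε/2) = q^(2n)` times the volume of the ball.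
Hence some point `z` lies in more than `2^(nε/2)` cylinders, and its projection `y` is the
required point.
-/

open MeasureTheory Metric Set Real
open scoped Finset ENNReal RealInnerProductSpace

open Classical in
theorem exists_lt_card_filter_mem_of_mul_lt_sum_measure {α ι : Type*} [MeasurableSpace α]
    (μ : Measure α) {s : Finset ι} {A : ι → Set α} {B : Set α} {T : ℝ≥0∞}
    (hA : ∀ i ∈ s, MeasurableSet (A i)) (hAB : ∀ i ∈ s, A i ⊆ B)
    (h : T * μ B < ∑ i ∈ s, μ (A i)) :
    ∃ y, T < #{i ∈ s | y ∈ A i} := by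
  by_contra! hT
  have hpt (y : α) : ∑ i ∈ s, (A i).indicator 1 y ≤ B.indicator (fun _ => T) y := by
    by_cases hy : y ∈ B
    · simpa [Set.indicator_apply, hy] using hT y
    · rw [Set.indicator_of_notMem hy]
      exact (Finset.sum_eq_zero fun i hi => Set.indicator_of_notMem (fun h => hy (hAB i hi h)) _).le
  refine h.not_ge ?_
  calc ∑ i ∈ s, μ (A i) = ∫⁻ y, ∑ i ∈ s, (A i).indicator 1 y ∂μ := by
        rw [lintegral_finsetSum' _ fun i hi => (measurable_one.indicator (hA i hi)).aemeasurable]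
        exact Finset.sum_congr rfl fun i hi => (lintegral_indicator_one (hA i hi)).symm
    _ ≤ ∫⁻ y, B.indicator (fun _ => T) y ∂μ := lintegral_mono hpt
    _ ≤ T * μ B := lintegral_indicator_const_le B T

section SolidCylinder

variable {V : Type*} [NormedAddCommGroup V] [InnerProductSpace ℝ V]

def solidCylinder (u : V) (a b r : ℝ) : Set V :=
  {y | ⟪u, y⟫ ∈ Icc a b ∧ ‖y - ⟪u, y⟫ • u‖ ≤ r}

theorem norm_sq_eq_inner_sq_add_norm_sub_sq {u : V} (hu : ‖u‖ = 1) (y : V) :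
    ‖y‖ ^ 2 = ⟪u, y⟫ ^ 2 + ‖y - ⟪u, y⟫ • u‖ ^ 2 := by
  rw [norm_sub_sq_real, real_inner_smul_right, norm_smul, real_inner_comm, hu, norm_eq_abs,
    mul_one, sq_abs]
  ring

theorem isClosed_solidCylinder (u : V) (a b r : ℝ) : IsClosed (solidCylinder u a b r) :=
  (isClosed_Icc.preimage (continuous_const.inner continuous_id)).inter
    (isClosed_le (continuous_id.sub ((continuous_const.inner continuous_id).smul
      continuous_const)).norm continuous_const)

theorem solidCylinder_subset_closedBall {u : V} (hu : ‖u‖ = 1) {a b r ρ : ℝ} (ha : 0 ≤ a)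
    (hρ : 0 ≤ ρ) (hbr : b ^ 2 + r ^ 2 ≤ ρ ^ 2) :
    solidCylinder u a b r ⊆ closedBall 0 ρ := by
  rintro y ⟨⟨hay, hyb⟩, hr⟩
  rw [mem_closedBall_zero_iff]
  refine le_of_sq_le_sq ?_ hρ
  rw [norm_sq_eq_inner_sq_add_norm_sub_sq hu]
  nlinarith [norm_nonneg (y - ⟪u, y⟫ • u)]

theorem closedBall_zero_subset_solidCylinder {u : V} (hu : ‖u‖ = 1) (ρ : ℝ) :
    closedBall (0 : V) ρ ⊆ solidCylinder u (-ρ) ρ ρ := by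
  intro y hy
  rw [mem_closedBall_zero_iff] at hy
  have hpyth := norm_sq_eq_inner_sq_add_norm_sub_sq hu y
  have hρ : 0 ≤ ρ := (norm_nonneg y).trans hy
  refine ⟨abs_le.mp (abs_le_of_sq_le_sq ?_ hρ), le_of_sq_le_sq ?_ hρ⟩ <;>
    nlinarith [sq_nonneg ‖y - ⟪u, y⟫ • u‖, sq_nonneg ⟪u, y⟫, norm_nonneg y]

theorem mul_norm_le_mul_inner_of_mem_solidCylinder {u y : V} (hu : ‖u‖ = 1) {a b r ρ δ : ℝ}
    (hy : y ∈ solidCylinder u a b r) (ha : 0 ≤ a) (hρ : 0 ≤ ρ) (hδ : 0 ≤ δ)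
    (hcone : ρ * r ≤ δ * a) :
    ρ * ‖y‖ ≤ √(ρ ^ 2 + δ ^ 2) * ⟪u, y⟫ := by
  obtain ⟨⟨hay, -⟩, hr⟩ := hy
  have hv := norm_nonneg (y - ⟪u, y⟫ • u)
  refine le_of_sq_le_sq ?_ (mul_nonneg (sqrt_nonneg _) (ha.trans hay))
  rw [mul_pow, mul_pow, norm_sq_eq_inner_sq_add_norm_sub_sq hu, sq_sqrt (by positivity)]
  have : (ρ * ‖y - ⟪u, y⟫ • u‖) ^ 2 ≤ (δ * ⟪u, y⟫) ^ 2 :=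
    pow_le_pow_left₀ (by positivity) ((mul_le_mul_of_nonneg_left hr hρ).trans
      (hcone.trans (mul_le_mul_of_nonneg_left hay hδ))) 2
  nlinarith

theorem norm_sub_smul_le_of_mul_norm_le_inner {x z : V} (hz : z ≠ 0) {ρ δ : ℝ} (hρ : 0 ≤ ρ)
    (hδ : 0 ≤ δ) (hx : ‖x‖ ^ 2 = ρ ^ 2 + δ ^ 2) (h : ρ * ‖z‖ ≤ ⟪x, z⟫) :
    ‖x - (ρ / ‖z‖) • z‖ ≤ δ := by
  have hz' : 0 < ‖z‖ := norm_pos_iff.mpr hz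
  have hinner : ρ ^ 2 ≤ ⟪x, (ρ / ‖z‖) • z⟫ := by
    rw [real_inner_smul_right]
    calc ρ ^ 2 = ρ / ‖z‖ * (ρ * ‖z‖) := by field_simp
      _ ≤ ρ / ‖z‖ * ⟪x, z⟫ := by gcongr
  refine le_of_sq_le_sq ?_ hδ
  rw [norm_sub_sq_real, hx, norm_smul, norm_div, norm_norm, Real.norm_of_nonneg hρ,
    div_mul_cancel₀ _ hz'.ne']
  linarith

theorem norm_sub_le_of_mem_solidCylinder {x y : V} {ρ δ a b r : ℝ} (hρ : 0 ≤ ρ) (hδ : 0 ≤ δ)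
    (hx : ‖x‖ = √(ρ ^ 2 + δ ^ 2)) (ha : 0 < a) (hcone : ρ * r ≤ δ * a)
    (hy : y ∈ solidCylinder (‖x‖⁻¹ • x) a b r) :
    ‖x - (ρ / ‖y‖) • y‖ ≤ δ := by
  have hpos : 0 < ⟪‖x‖⁻¹ • x, y⟫ := ha.trans_le hy.1.1
  have hx0 : x ≠ 0 := by rintro rfl; simp at hpos
  have hy0 : y ≠ 0 := by rintro rfl; simp at hpos
  refine norm_sub_smul_le_of_mul_norm_le_inner hy0 hρ hδ
    (by rw [hx, sq_sqrt (by positivity)]) ?_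
  have hu : ‖‖x‖⁻¹ • x‖ = 1 := by simp [norm_smul, hx0]
  have h := mul_norm_le_mul_inner_of_mem_solidCylinder hu hy ha.le hρ hδ hcone
  rwa [← hx, real_inner_smul_left, mul_inv_cancel_left₀ (norm_ne_zero_iff.mpr hx0)] at h

variable [FiniteDimensional ℝ V] [MeasurableSpace V] [BorelSpace V]

theorem volume_solidCylinder {m : ℕ} (hV : Module.finrank ℝ V = m + 1) {u : V} (hu : ‖u‖ = 1)
    (a b : ℝ) {r : ℝ} (hr : 0 ≤ r) :
    volume (solidCylinder u a b r) = ENNReal.ofReal ((b - a) * r ^ m) *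
      volume (closedBall (0 : EuclideanSpace ℝ (Fin m)) 1) := by
  set K := ℝ ∙ u
  have hK (y : V) : K.starProjection y = ⟪u, y⟫ • u :=
    Submodule.starProjection_unit_singleton ℝ hu y
  let e : V ≃ᵐ K × Kᗮ :=
    K.orthogonalDecomposition.toMeasurableEquiv.trans (MeasurableEquiv.toLp 2 (K × Kᗮ)).symm
  have he : MeasurePreserving e :=
    K.orthogonalDecomposition.measurePreserving.trans (WithLp.volume_preserving_ofLp K Kᗮ)
  let f : ℝ ≃ₗᵢ[ℝ] K := LinearIsometryEquiv.toSpanUnitSingleton u hu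
  have hf (y : V) : f.symm (K.orthogonalProjectionOnto y) = ⟪u, y⟫ := by
    rw [LinearIsometryEquiv.symm_apply_eq]
    ext
    rw [Submodule.coe_orthogonalProjectionOnto_apply, hK]
    rfl
  have : Fact (Module.finrank ℝ V = m + 1) := ⟨hV⟩
  have hu0 : u ≠ 0 := norm_ne_zero_iff.mp (hu ▸ one_ne_zero)
  let g := (OrthonormalBasis.fromOrthogonalSpanSingleton (𝕜 := ℝ) m hu0).repr
  have hcyl : solidCylinder u a b r =
      e ⁻¹' ((f.symm ⁻¹' Icc a b) ×ˢ (g ⁻¹' closedBall 0 r)) := by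
    ext y
    simp [e, solidCylinder, hf, hK, g.preimage_closedBall]
  rw [hcyl, he.measure_preimage ((measurableSet_Icc.preimage f.symm.continuous.measurable).prod
      (measurableSet_closedBall.preimage g.continuous.measurable)).nullMeasurableSet,
    Measure.volume_eq_prod, Measure.prod_prod,
    f.symm.measurePreserving.measure_preimage measurableSet_Icc.nullMeasurableSet,
    g.measurePreserving.measure_preimage measurableSet_closedBall.nullMeasurableSet,
    Real.volume_Icc, Measure.addHaar_closedBall' _ _ hr, finrank_euclideanSpace_fin, ← mul_assoc,
    ← ENNReal.ofReal_mul' (pow_nonneg hr m)]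

theorem volume_closedBall_le {m : ℕ} (hV : Module.finrank ℝ V = m + 1) {ρ : ℝ} (hρ : 0 ≤ ρ) :
    volume (closedBall (0 : V) ρ) ≤ ENNReal.ofReal (2 * ρ * ρ ^ m) *
      volume (closedBall (0 : EuclideanSpace ℝ (Fin m)) 1) := by
  have : Nontrivial V := Module.nontrivial_of_finrank_eq_succ hV
  obtain ⟨u, hu⟩ := exists_norm_eq V zero_le_one
  calc volume (closedBall (0 : V) ρ) ≤ volume (solidCylinder u (-ρ) ρ ρ) :=
        measure_mono (closedBall_zero_subset_solidCylinder hu ρ)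
    _ = _ := by rw [volume_solidCylinder hV hu _ _ hρ, sub_neg_eq_add, ← two_mul]

theorem exists_norm_eq_lt_ncard_norm_sub_le {m : ℕ} (hV : Module.finrank ℝ V = m + 1)
    {C : Finset V} {ρ δ a b r T : ℝ} (hρ : 0 < ρ) (hδ : 0 ≤ δ)
    (hC : ∀ x ∈ C, ‖x‖ = √(ρ ^ 2 + δ ^ 2)) (ha : 0 < a) (hr : 0 ≤ r)
    (hbr : b ^ 2 + r ^ 2 ≤ ρ ^ 2) (hcone : ρ * r ≤ δ * a) (hT : 0 ≤ T)
    (hvol : T * (2 * ρ * ρ ^ m) < #C * ((b - a) * r ^ m)) :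
    ∃ y : V, ‖y‖ = ρ ∧ T < {x ∈ (C : Set V) | ‖x - y‖ ≤ δ}.ncard := by
  classical
  set A : V → Set V := fun x => solidCylinder (‖x‖⁻¹ • x) a b r
  have hu : ∀ x ∈ C, ‖‖x‖⁻¹ • x‖ = 1 := fun x hx => by
    have : x ≠ 0 := norm_ne_zero_iff.mp (by rw [hC x hx]; positivity)
    simp [norm_smul, this]
  set ω := volume (closedBall (0 : EuclideanSpace ℝ (Fin m)) 1)
  have hω : ω ≠ 0 := (measure_closedBall_pos _ _ one_pos).ne'
  have hω' : ω ≠ ⊤ := measure_closedBall_lt_top.ne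
  have hmeasure : ENNReal.ofReal T * volume (closedBall (0 : V) ρ) < ∑ x ∈ C, volume (A x) :=
    calc ENNReal.ofReal T * volume (closedBall (0 : V) ρ)
        ≤ ENNReal.ofReal T * (ENNReal.ofReal (2 * ρ * ρ ^ m) * ω) := by
          gcongr
          exact volume_closedBall_le hV hρ.le
      _ = ENNReal.ofReal (T * (2 * ρ * ρ ^ m)) * ω := by rw [ENNReal.ofReal_mul hT]; ring
      _ < ENNReal.ofReal (#C * ((b - a) * r ^ m)) * ω :=
          ENNReal.mul_lt_mul_left hω hω' ((ENNReal.ofReal_lt_ofReal_iff_of_nonneg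
            (by positivity)).mpr hvol)
      _ = ∑ x ∈ C, volume (A x) := by
          rw [Finset.sum_congr rfl fun x hx => volume_solidCylinder hV (hu x hx) a b hr,
            Finset.sum_const, nsmul_eq_mul, ENNReal.ofReal_mul (Nat.cast_nonneg _),
            ENNReal.ofReal_natCast, mul_assoc]
  obtain ⟨y₀, hy₀⟩ := exists_lt_card_filter_mem_of_mul_lt_sum_measure volume
    (fun x _ => (isClosed_solidCylinder _ a b r).measurableSet)
    (fun x hx => solidCylinder_subset_closedBall (hu x hx) ha.le hρ.le hbr) hmeasure
  rw [← ENNReal.ofReal_natCast, ENNReal.ofReal_lt_ofReal_iff_of_nonneg hT] at hy₀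
  obtain ⟨x₀, hx₀⟩ : {x ∈ C | y₀ ∈ A x}.Nonempty :=
    Finset.card_pos.mp (by exact_mod_cast hT.trans_lt hy₀)
  have hy₀0 : y₀ ≠ 0 := by
    rintro rfl
    simpa using ha.trans_le (Finset.mem_filter.mp hx₀).2.1.1
  have hsub : {x ∈ C | y₀ ∈ A x} ⊆ {x ∈ C | ‖x - (ρ / ‖y₀‖) • y₀‖ ≤ δ} := fun x hx => by
    obtain ⟨hxC, hxA⟩ := Finset.mem_filter.mp hx
    exact Finset.mem_filter.mpr
      ⟨hxC, norm_sub_le_of_mem_solidCylinder hρ.le hδ (hC x hxC) ha hcone hxA⟩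
  refine ⟨(ρ / ‖y₀‖) • y₀, ?_, hy₀.trans_le ?_⟩
  · rw [norm_smul, Real.norm_of_nonneg (by positivity),
      div_mul_cancel₀ _ (norm_ne_zero_iff.mpr hy₀0)]
  · simpa [← Set.ncard_coe_finset] using Finset.card_le_card hsub

noncomputable def cylinderHeight (κ q : ℝ) : ℝ := √(1 - 1 / (κ * q) ^ 2) - √(1 - 1 / κ ^ 2)

theorem cylinderHeight_pos {κ q : ℝ} (hκ : 1 < κ) (hq : 1 < q) : 0 < cylinderHeight κ q := by
  have hκ0 : 0 < κ := one_pos.trans hκ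
  have h1 : 1 / (κ * q) ^ 2 < 1 / κ ^ 2 := by gcongr; exact lt_mul_of_one_lt_right hκ0 hq
  have h2 : 1 / κ ^ 2 < 1 := by rw [div_lt_one (by positivity)]; exact one_lt_pow₀ hκ two_ne_zero
  exact sub_pos.mpr (sqrt_lt_sqrt (by linarith) (by linarith))

theorem pow_mul_lt_mul_of_le_of_lt {K κ q g ρ : ℝ} {m : ℕ} (hκ : 0 < κ) (hq : 1 ≤ q) (hg : 0 < g)
    (hρ : 0 < ρ) (hK : (κ * q ^ 4) ^ (m + 1) ≤ K) (hgrowth : 2 / (κ * g) < q ^ (m + 1)) :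
    q ^ (2 * (m + 1)) * (2 * ρ * ρ ^ m) < K * (ρ * g * (ρ / (κ * q)) ^ m) := by
  have hq0 : 0 < q := one_pos.trans_le hq
  have h2 : 2 < κ * g * q ^ (m + 1) := by rwa [div_lt_iff₀' (by positivity)] at hgrowth
  calc q ^ (2 * (m + 1)) * (2 * ρ * ρ ^ m) = 2 * q ^ (2 * (m + 1)) * ρ ^ (m + 1) := by ring
    _ < κ * g * q ^ (m + 1) * q ^ (2 * (m + 1)) * ρ ^ (m + 1) := by gcongr
    _ ≤ κ * g * q ^ (m + 1) * q ^ (2 * (m + 1)) * ρ ^ (m + 1) * q :=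
        le_mul_of_one_le_right (by positivity) hq
    _ = (κ * q ^ 4) ^ (m + 1) * (ρ * g * (ρ / (κ * q)) ^ m) := by
        rw [div_pow, mul_pow κ q]
        field_simp
        ring
    _ ≤ K * (ρ * g * (ρ / (κ * q)) ^ m) := by gcongr

theorem exists_norm_eq_pow_lt_ncard_norm_sub_le {m : ℕ} (hV : Module.finrank ℝ V = m + 1)
    {C : Finset V} {ρ δ κ q : ℝ} (hρ : 0 < ρ) (hδ : 0 ≤ δ) (hκ : 1 < κ)
    (hρδ : ρ ^ 2 + δ ^ 2 = κ ^ 2 * δ ^ 2) (hq : 1 < q)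
    (hC : ∀ x ∈ C, ‖x‖ = √(ρ ^ 2 + δ ^ 2)) (hcard : (κ * q ^ 4) ^ (m + 1) ≤ #C)
    (hgrowth : 2 / (κ * cylinderHeight κ q) < q ^ (m + 1)) :
    ∃ y : V, ‖y‖ = ρ ∧ q ^ (2 * (m + 1)) < {x ∈ (C : Set V) | ‖x - y‖ ≤ δ}.ncard := by
  have hκ0 : 0 < κ := one_pos.trans hκ
  have hκ2 : 1 / κ ^ 2 < 1 := by rw [div_lt_one (by positivity)]; exact one_lt_pow₀ hκ two_ne_zero
  have hκq2 : 1 / (κ * q) ^ 2 ≤ 1 / κ ^ 2 := by gcongr; exact le_mul_of_one_le_right hκ0.le hq.le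
  -- The cylinder along `x` is `[ρ c, ρ c'] × closedBall 0 (ρ / (κ q))`: `c'` puts its top rim on
  -- the sphere of radius `ρ`, and `ρ / κ = δ c` puts its bottom rim inside the cone
  -- `ρ ‖z‖ ≤ ⟪x, z⟫`.
  set c := √(1 - 1 / κ ^ 2)
  set c' := √(1 - 1 / (κ * q) ^ 2)
  have hc : 0 < c := sqrt_pos.mpr (by linarith)
  have hρκ : ρ / κ = δ * c := by
    refine (sq_eq_sq₀ (by positivity) (by positivity)).mp ?_
    rw [div_pow, mul_pow, sq_sqrt (by linarith)]
    field_simp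
    linarith
  have hbr : (ρ * c') ^ 2 + (ρ / (κ * q)) ^ 2 ≤ ρ ^ 2 := by
    refine le_of_eq ?_
    rw [mul_pow, sq_sqrt (by linarith)]
    field_simp
    ring
  have hcone : ρ * (ρ / (κ * q)) ≤ δ * (ρ * c) := by
    rw [mul_left_comm, ← hρκ]
    gcongr
    exact le_mul_of_one_le_right hκ0.le hq.le
  refine exists_norm_eq_lt_ncard_norm_sub_le hV hρ hδ hC (by positivity) (by positivity) hbr hcone
    (by positivity) ?_
  rw [← mul_sub]
  exact pow_mul_lt_mul_of_le_of_lt hκ0 hq.le (cylinderHeight_pos hκ hq) hρ hcard hgrowth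

end SolidCylinder

theorem two_rpow_half_mul_logb {x : ℝ} (hx : 0 < x) : (2 : ℝ) ^ ((1 / 2) * logb 2 x) = √x := by
  rw [mul_comm, rpow_mul zero_le_two, rpow_logb two_pos (by norm_num) hx, sqrt_eq_rpow]

/-- List-decoding converse for an omniscient adversary: let `0 < N < P` and `ε > 0`.
For all sufficiently large `n`, every spherical code `C` on the sphere of radius `√(nP)`
with `|C| ≥ 2^(n((1/2)log₂(P/N) + ε))` admits a point `y` with `‖y‖₂ = √(n(P-N))` whose
ball of radius `√(nN)` contains at least `2^(nε/2)` codewords. -/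
theorem omniscient_list_decoding_converse (P N ε : ℝ)
    (hN : 0 < N) (hNP : N < P) (hε : 0 < ε) :
    ∃ n₀ : ℕ, ∀ n : ℕ, n₀ ≤ n →
      ∀ C : Finset (EuclideanSpace ℝ (Fin n)),
        (∀ x ∈ C, ‖x‖ = Real.sqrt ((n : ℝ) * P)) →
        (2 : ℝ) ^ ((n : ℝ) * ((1 / 2) * Real.logb 2 (P / N) + ε)) ≤ (C.card : ℝ) →
        ∃ y : EuclideanSpace ℝ (Fin n), ‖y‖ = Real.sqrt ((n : ℝ) * (P - N)) ∧
          (2 : ℝ) ^ ((n : ℝ) * ε / 2) ≤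
            (({x ∈ (C : Set (EuclideanSpace ℝ (Fin n))) |
                ‖x - y‖ ≤ Real.sqrt ((n : ℝ) * N)}).ncard : ℝ) := by
  have hP : 0 < P := hN.trans hNP
  set κ := √(P / N)
  have hκ : 1 < κ := by rw [lt_sqrt zero_le_one, one_pow, one_lt_div hN]; exact hNP
  set q : ℝ := 2 ^ (ε / 4)
  have hq : 1 < q := one_lt_rpow one_lt_two (by positivity)
  obtain ⟨n₀, hn₀⟩ := pow_unbounded_of_one_lt (2 / (κ * cylinderHeight κ q)) hq
  refine ⟨n₀ + 1, fun n hn C hC hcard => ?_⟩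
  obtain ⟨m, rfl⟩ : ∃ m, n = m + 1 := ⟨n - 1, by omega⟩
  set ρ := √(((m + 1 : ℕ) : ℝ) * (P - N))
  set δ := √(((m + 1 : ℕ) : ℝ) * N)
  have hρδ : ρ ^ 2 + δ ^ 2 = κ ^ 2 * δ ^ 2 := by
    rw [sq_sqrt (by positivity), sq_sqrt (by positivity), sq_sqrt (by positivity)]
    field_simp
    ring
  have hC' (x) (hx : x ∈ C) : ‖x‖ = √(ρ ^ 2 + δ ^ 2) := by
    rw [hC x hx, sq_sqrt (by positivity), sq_sqrt (by positivity)]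
    ring_nf
  have hcard' : (κ * q ^ 4) ^ (m + 1) ≤ #C := by
    have hq4 : q ^ 4 = 2 ^ ε := by rw [← rpow_mul_natCast zero_le_two]; norm_num
    rwa [mul_comm, rpow_mul_natCast zero_le_two, rpow_add two_pos,
      two_rpow_half_mul_logb (by positivity), ← hq4] at hcard
  have hT : (2 : ℝ) ^ (((m + 1 : ℕ) : ℝ) * ε / 2) = q ^ (2 * (m + 1)) := by
    rw [← rpow_mul_natCast zero_le_two]
    push_cast
    ring_nf
  obtain ⟨y, hy, hcount⟩ := exists_norm_eq_pow_lt_ncard_norm_sub_le finrank_euclideanSpace_fin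
    (sqrt_pos.mpr (by positivity)) (sqrt_nonneg _) hκ hρδ hq hC' hcard'
    (hn₀.trans_le (pow_le_pow_right₀ hq.le (by omega)))
  exact ⟨y, hy, hT ▸ hcount.le⟩
end
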